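/- Let X be a complex Banach space on whose unit ball B there exists a smooth ∂̄-closed (0,1)-form f that is not ∂̄-exact on any open subset. If a point p₀ = (x₀,z₀) of the almost complex manifold M_f = B × ℂ has a neighborhood C^m-biholomorphic (m ≥ 1) to an open subset of a Banach space, then there exist a neighborhood U₀ ⊆ B of x₀ and u ∈ C^m(U₀) with ∂̄u = f on U₀ — a contradiction. Hence no open subset of M_f is biholomorphic to an open subset of a Banach space. -/

import Mathlib

/-!  Complexified tangent vectors of a complex Banach space `F` are modeled as pairs
`F × F` (`(v, w)` encodes `v + i·w`); the `(0,1)` vectors are those fixed by `proj01`,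
i.e. of the form `(c, i·c)`.  For `M_f = B × ℂ` the `(0,1)` vectors at `(x,z)` are the
`(ζ, ν)` with `ζ = ζ^{0,1}` and `ν^{1,0} = f(ζ)`. -/

section
variable {F : Type*} [NormedAddCommGroup F] [NormedSpace ℂ F]

/-- Projection onto the `(0,1)`-part in the complexification of a complex space. -/
noncomputable def proj01 (p : F × F) : F × F :=
  ((1/2 : ℂ) • (p.1 - Complex.I • p.2), (1/2 : ℂ) • (p.2 + Complex.I • p.1))

/-- Projection onto the `(1,0)`-part in the complexification of a complex space. -/
noncomputable def proj10 (p : F × F) : F × F :=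
  ((1/2 : ℂ) • (p.1 + Complex.I • p.2), (1/2 : ℂ) • (p.2 - Complex.I • p.1))

/-- The embedding `F ≅ F^{1,0} ⊆ F × F`, `c ↦ (c, −i·c)`. -/
def emb10 (c : F) : F × F := (c, -(Complex.I • c))

/-- The `∂̄` of a function: `∂̄u(x)ξ = ½(Du(x)ξ + i·Du(x)(iξ))`. -/
noncomputable def dbarAt (u : F → ℂ) (x : F) (ξ : F) : ℂ :=
  (1/2 : ℂ) * (fderiv ℝ u x ξ + Complex.I * fderiv ℝ u x (Complex.I • ξ))
end

variable {E : Type*} [NormedAddCommGroup E] [NormedSpace ℂ E]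

/-- Complex-linear extension of a `(0,1)`-form to complexified tangent vectors. -/
noncomputable def extf (h : E → (E →L[ℝ] ℂ)) (x : E) (ζ : E × E) : ℂ :=
  h x ζ.1 + Complex.I * h x ζ.2

/-- The `(0,1)` tangent space of `M_h = B × ℂ` at `(x, z)`. -/
noncomputable def T01 (h : E → (E →L[ℝ] ℂ)) (x : E) : Set ((E × E) × (ℂ × ℂ)) :=
  {V | V.1 = proj01 V.1 ∧ proj10 V.2 = emb10 (extf h x V.1)}

lemma mem_T01_fiber (h : E → (E →L[ℝ] ℂ)) (x : E) (t : ℂ) :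
    ((((0 : E), (0 : E)), (-(Complex.I * t), t)) : (E × E) × (ℂ × ℂ)) ∈ T01 h x := by
  constructor
  · simp [proj01]
  · simp only [extf]
    simp only [map_zero]
    simp [proj10, emb10, smul_eq_mul]
    rw [← mul_assoc, Complex.I_mul_I]; ring

lemma mem_T01_base (h : E → (E →L[ℝ] ℂ)) (x : E) (a : E)
    (hx : h x (Complex.I • a) = -Complex.I * h x a) :
    (((a, Complex.I • a), ((4 * h x a : ℂ), (0 : ℂ))) : (E × E) × (ℂ × ℂ)) ∈ T01 h x := by
  have hIIa : Complex.I • Complex.I • a = -a := by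
    rw [smul_smul, Complex.I_mul_I, neg_one_smul]
  constructor
  · apply Prod.ext <;> simp [proj01, hIIa, smul_smul, sub_neg_eq_add] <;> module
  · have hext : extf h x (a, Complex.I • a) = 2 * h x a := by
      simp only [extf, hx]; ring_nf; rw [Complex.I_sq]; ring
    rw [hext]
    apply Prod.ext
    · simp [proj10, emb10, smul_eq_mul]; ring
    · simp [proj10, emb10, smul_eq_mul]; ring

/-- Let `X` be a complex Banach space whose unit ball `B` carries a smooth
`∂̄`-closed `(0,1)`-form `f` that is not `∂̄`-exact on any open subset.  Then no (nonempty)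
open subset of the almost complex manifold `M_f = B × ℂ` is `C^m`-biholomorphic (`m ≥ 1`)
to an open subset of a complex Banach space. -/
theorem Mf_nowhere_biholomorphic_to_Banach [CompleteSpace E]
    (f : E → (E →L[ℝ] ℂ))
    (hf01 : ∀ x ∈ Metric.ball (0 : E) 1, ∀ ξ : E,
      f x (Complex.I • ξ) = -Complex.I * f x ξ)
    (hfsm : ContDiffOn ℝ (⊤ : ℕ∞) f (Metric.ball (0 : E) 1))
    (hfcl : ∀ x ∈ Metric.ball (0 : E) 1, ∀ ξ η : E,
      (fderiv ℝ f x ξ) η + Complex.I * (fderiv ℝ f x (Complex.I • ξ)) η =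
      (fderiv ℝ f x η) ξ + Complex.I * (fderiv ℝ f x (Complex.I • η)) ξ)
    -- `f` is not `∂̄`-exact on any open subset
    (hfne : ∀ G : Set E, IsOpen G → G.Nonempty → G ⊆ Metric.ball (0 : E) 1 →
      ¬∃ u : E → ℂ, ContDiffOn ℝ 1 u G ∧ ∀ x ∈ G, ∀ ξ : E, dbarAt u x ξ = f x ξ) :
    ∀ (m : ℕ∞), 1 ≤ m →
    ∀ (W : Type*) (_ : NormedAddCommGroup W), ∀ (_ : NormedSpace ℂ W),
    ∀ (U : Set (E × ℂ)), IsOpen U → U.Nonempty →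
      U ⊆ Metric.ball (0 : E) 1 ×ˢ (Set.univ : Set ℂ) →
    ∀ (Φ : E × ℂ → W) (Ψ : W → E × ℂ),
      ContDiffOn ℝ m Φ U →
      IsOpen (Φ '' U) →
      ContDiffOn ℝ m Ψ (Φ '' U) →
      (∀ p ∈ U, Ψ (Φ p) = p) →
      (∀ w ∈ Φ '' U, Φ (Ψ w) = w) →
      -- the complexified differential of `Φ` maps `T^{0,1}M_f` to `(0,1)` vectors of `W`
      ¬(∀ p ∈ U, ∀ V : (E × E) × (ℂ × ℂ), V ∈ T01 f p.1 →
          fderiv ℝ Φ p (V.1.2, V.2.2) =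
            Complex.I • fderiv ℝ Φ p (V.1.1, V.2.1)) := by
  intro m hm W _ _ U hUopen hUne hUsub Φ Ψ hΦ hΦUopen hΨ hΨΦ hΦΨ hT01
  obtain ⟨p₀, hp₀⟩ := hUne
  have hm' : (1 : WithTop ℕ∞) ≤ (m : WithTop ℕ∞) := by exact_mod_cast hm
  have hm0 : (m : WithTop ℕ∞) ≠ 0 := ne_of_gt (lt_of_lt_of_le zero_lt_one hm')
  -- differentiability of Φ on U
  have hΦdiff : ∀ p ∈ U, DifferentiableAt ℝ Φ p := fun p hp =>
    (hΦ.differentiableOn hm0).differentiableAt (hUopen.mem_nhds hp)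
  -- Φ p₀ is in the image, Ψ differentiable there
  have hΦp₀ : Φ p₀ ∈ Φ '' U := ⟨p₀, hp₀, rfl⟩
  have hΨdiff : DifferentiableAt ℝ Ψ (Φ p₀) :=
    (hΨ.differentiableOn hm0).differentiableAt (hΦUopen.mem_nhds hΦp₀)
  -- D(Ψ∘Φ) = id at p₀, hence DΦ p₀ (0,1) ≠ 0
  have hchain : (fderiv ℝ Ψ (Φ p₀)).comp (fderiv ℝ Φ p₀) =
      ContinuousLinearMap.id ℝ (E × ℂ) := by
    have h1 : HasFDerivAt (Ψ ∘ Φ) ((fderiv ℝ Ψ (Φ p₀)).comp (fderiv ℝ Φ p₀)) p₀ :=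
      (hΨdiff.hasFDerivAt).comp p₀ (hΦdiff p₀ hp₀).hasFDerivAt
    have h2 : Ψ ∘ Φ =ᶠ[nhds p₀] id :=
      Filter.eventuallyEq_of_mem (hUopen.mem_nhds hp₀) fun p hp => hΨΦ p hp
    have h3 : HasFDerivAt (Ψ ∘ Φ) (ContinuousLinearMap.id ℝ (E × ℂ)) p₀ :=
      (hasFDerivAt_id p₀).congr_of_eventuallyEq h2
    exact h1.unique h3
  have hv0 : fderiv ℝ Φ p₀ (((0 : E), (1 : ℂ))) ≠ 0 := by
    intro h0
    have := congrArg (fun T => T (((0 : E), (1 : ℂ)))) hchain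
    simp only [ContinuousLinearMap.comp_apply, ContinuousLinearMap.id_apply, h0,
      ContinuousLinearMap.coe_comp', Function.comp_apply, map_zero] at this
    exact one_ne_zero (congrArg Prod.snd this).symm
  -- a complex-linear functional separating that vector
  obtain ⟨lam, hlamnorm, hlamval⟩ := exists_dual_vector ℂ _ (norm_ne_zero_iff.2 hv0)
  -- the composed "coordinate" L p = lam ∘ DΦ p
  set L : (E × ℂ) → ((E × ℂ) →L[ℝ] ℂ) :=
    fun p => (lam.restrictScalars ℝ).comp (fderiv ℝ Φ p) with hLdef
  have hLapp : ∀ p v, L p v = lam (fderiv ℝ Φ p v) := fun _ _ => rfl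
  set ψ : (E × ℂ) → ℂ := fun p => lam (Φ p) with hψdef
  have hψ' : ∀ p ∈ U, HasFDerivAt ψ (L p) p := fun p hp =>
    ((lam.restrictScalars ℝ).hasFDerivAt).comp p (hΦdiff p hp).hasFDerivAt
  -- membership of p.1 in the unit ball
  have hball : ∀ p ∈ U, p.1 ∈ Metric.ball (0 : E) 1 := fun p hp => (hUsub hp).1
  -- relation R1 : L p (0, t) = t * L p (0, 1)
  have hR1 : ∀ p ∈ U, ∀ t : ℂ, L p ((0 : E), t) = t * L p ((0 : E), (1 : ℂ)) := by
    intro p hp t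
    have key : ∀ s : ℂ, L p ((0 : E), s) = Complex.I * L p ((0 : E), -(Complex.I * s)) := by
      intro s
      have h := hT01 p hp _ (mem_T01_fiber f p.1 s)
      have := congrArg lam h
      simpa only [hLapp, map_smul, smul_eq_mul] using this
    have hI : L p ((0 : E), Complex.I) = Complex.I * L p ((0 : E), (1 : ℂ)) := by
      have := key Complex.I
      rw [show -(Complex.I * Complex.I) = (1 : ℂ) by rw [Complex.I_mul_I]; ring] at this
      exact this
    have hdec : ((0 : E), t) =
        t.re • (((0 : E), (1 : ℂ))) + t.im • (((0 : E), Complex.I)) := by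
      apply Prod.ext
      · simp
      · simp [Complex.real_smul, Complex.re_add_im]
    rw [hdec, map_add, map_smul, map_smul, hI]
    have key2 : ∀ c : ℂ, (t.re : ℂ) * c + (t.im : ℂ) * (Complex.I * c) = t * c := by
      intro c
      conv_rhs => rw [← Complex.re_add_im t]
      ring
    rw [Complex.real_smul, Complex.real_smul]
    exact key2 _
  -- relation R2
  have hR2 : ∀ p ∈ U, ∀ ξ : E, L p (Complex.I • ξ, (0 : ℂ)) =
      Complex.I * L p (ξ, (0 : ℂ)) +
        4 * f p.1 ξ * (Complex.I * L p ((0 : E), (1 : ℂ))) := by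
    intro p hp ξ
    have h := hT01 p hp _ (mem_T01_base f p.1 ξ (hf01 p.1 (hball p hp) ξ))
    have h' := congrArg lam h
    simp only [map_smul, smul_eq_mul] at h'
    have hsplit : ((ξ, (4 * f p.1 ξ : ℂ)) : E × ℂ) = (ξ, (0 : ℂ)) + ((0 : E), 4 * f p.1 ξ) := by
      simp
    have h2 : L p (Complex.I • ξ, (0 : ℂ)) = Complex.I * L p (ξ, 4 * f p.1 ξ) := h'
    rw [hsplit, map_add, hR1 p hp] at h2
    rw [h2]; ring
  -- nonvanishing of the z-derivative at p₀
  set c₀ : ℂ := L p₀ ((0 : E), (1 : ℂ)) with hc₀def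
  have hc₀ : c₀ ≠ 0 := by
    have h1 : c₀ = (‖fderiv ℝ Φ p₀ (((0 : E), (1 : ℂ)))‖ : ℂ) := hlamval
    rw [h1]
    exact Complex.ofReal_ne_zero.2 (norm_ne_zero_iff.2 hv0)
  -- decomposition of L p
  have hLdec : ∀ p ∈ U, ∀ v : E × ℂ,
      L p v = L p (v.1, (0 : ℂ)) + v.2 * L p ((0 : E), (1 : ℂ)) := by
    intro p hp v
    have hv : (v : E × ℂ) = (v.1, (0 : ℂ)) + ((0 : E), v.2) := by simp
    rw [show L p v = L p ((v.1, (0 : ℂ)) + ((0 : E), v.2)) by rw [← hv], map_add, hR1 p hp]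
  -- the derivative of F as a continuous linear equivalence
  set T : (E × ℂ) →L[ℝ] (E × ℂ) :=
    (ContinuousLinearMap.fst ℝ E ℂ).prod (L p₀) with hTdef
  set J : (E × ℂ) →L[ℝ] (E × ℂ) :=
    (ContinuousLinearMap.fst ℝ E ℂ).prod (0 : (E × ℂ) →L[ℝ] ℂ) with hJdef
  set S : (E × ℂ) →L[ℝ] (E × ℂ) :=
    (ContinuousLinearMap.fst ℝ E ℂ).prod
      (c₀⁻¹ • (ContinuousLinearMap.snd ℝ E ℂ - (L p₀).comp J)) with hSdef
  have hTapp : ∀ v : E × ℂ, T v = (v.1, L p₀ v) := fun v => rfl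
  have hSapp : ∀ v : E × ℂ, S v = (v.1, c₀⁻¹ * (v.2 - L p₀ (v.1, (0 : ℂ)))) := fun v => rfl
  have hleft : Function.LeftInverse S T := by
    intro v
    rw [hTapp, hSapp]
    simp only
    apply Prod.ext
    · rfl
    · show c₀⁻¹ * (L p₀ v - L p₀ (v.1, (0 : ℂ))) = v.2
      rw [hLdec p₀ hp₀ v]
      rw [← hc₀def]
      field_simp
      ring
  have hright : Function.RightInverse S T := by
    intro v
    rw [hSapp, hTapp]
    apply Prod.ext
    · rfl
    · show L p₀ (v.1, c₀⁻¹ * (v.2 - L p₀ (v.1, (0 : ℂ)))) = v.2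
      rw [hLdec p₀ hp₀ (v.1, c₀⁻¹ * (v.2 - L p₀ (v.1, (0 : ℂ))))]
      rw [← hc₀def]
      field_simp
      ring
  set e : (E × ℂ) ≃L[ℝ] (E × ℂ) := ContinuousLinearEquiv.equivOfInverse T S hleft hright
    with hedef
  -- the auxiliary map F
  set Fm : (E × ℂ) → (E × ℂ) := fun p => (p.1, ψ p) with hFmdef
  have hFmc : ContDiffAt ℝ m Fm p₀ :=
    (contDiff_fst.contDiffAt).prodMk
      (((lam.restrictScalars ℝ).contDiff).comp_contDiffAt p₀
        (hΦ.contDiffAt (hUopen.mem_nhds hp₀)))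
  have hFd' : HasFDerivAt Fm ((e : (E × ℂ) →L[ℝ] (E × ℂ))) p₀ :=
    hasFDerivAt_fst.prodMk (hψ' p₀ hp₀)
  -- the local inverse G
  set G := hFmc.localInverse hFd' hm0 with hGdef
  have hG0 : G (Fm p₀) = p₀ := hFmc.localInverse_apply_image hFd' hm0
  have hGc : ContDiffAt ℝ m G (Fm p₀) := hFmc.to_localInverse hFd' hm0
  have hrt : ∀ᶠ y in nhds (Fm p₀), Fm (G y) = y :=
    (hFmc.hasStrictFDerivAt' hFd' hm0).eventually_right_inverse
  have hGc1 : ContDiffAt ℝ 1 G (Fm p₀) := hGc.of_le hm'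
  obtain ⟨N, hNmem, hGN⟩ := hGc1.contDiffOn le_rfl (by simp)
  have hGNi : ContDiffOn ℝ 1 G (interior N) := hGN.mono interior_subset
  have hNint : Fm p₀ ∈ interior N := mem_interior_iff_mem_nhds.2 hNmem
  -- continuity of the z-derivative on U
  have hLcont : ContinuousOn (fun p => L p ((0 : E), (1 : ℂ))) U := by
    have h1 : ContinuousOn (fderiv ℝ Φ) U := hΦ.continuousOn_fderiv_of_isOpen hUopen hm'
    have h2 : Continuous fun (T' : (E × ℂ) →L[ℝ] W) => lam (T' (((0 : E), (1 : ℂ)))) :=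
      lam.continuous.comp (ContinuousLinearMap.apply ℝ W (((0 : E), (1 : ℂ)))).continuous
    exact h2.comp_continuousOn h1
  set U' : Set (E × ℂ) := U ∩ (fun p => L p ((0 : E), (1 : ℂ))) ⁻¹' {(0 : ℂ)}ᶜ with hU'def
  have hU'open : IsOpen U' := hLcont.isOpen_inter_preimage hUopen isOpen_compl_singleton
  have hp₀U' : p₀ ∈ U' := ⟨hp₀, by simpa using hc₀⟩
  have hev2 : ∀ᶠ y in nhds (Fm p₀), G y ∈ U' :=
    hGc1.continuousAt.eventually_mem (hU'open.mem_nhds (by rw [hG0]; exact hp₀U'))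
  have hev3 : ∀ᶠ y in nhds (Fm p₀), y ∈ interior N := isOpen_interior.eventually_mem hNint
  have hall := hrt.and (hev2.and hev3)
  obtain ⟨O, hOsub, hOopen, hOmem⟩ := mem_nhds_iff.1 hall
  -- pull back along x ↦ (x, cc)
  set cc : ℂ := ψ p₀ with hccdef
  have hFmp₀ : Fm p₀ = (p₀.1, cc) := rfl
  set ι : E → E × ℂ := fun x => (x, cc) with hιdef
  have hιc : Continuous ι := continuous_id.prodMk continuous_const
  set O' : Set E := ι ⁻¹' O with hO'def
  have hO'open : IsOpen O' := hOopen.preimage hιc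
  have hx₀O' : p₀.1 ∈ O' := by
    show ι p₀.1 ∈ O
    rw [show ι p₀.1 = Fm p₀ from rfl]
    exact hOmem
  set g : E → ℂ := fun x => (G (ι x)).2 with hgdef
  -- basic facts for x ∈ O'
  have hq1 : ∀ x ∈ O', (G (ι x)).1 = x := by
    intro x hx
    have h1 : Fm (G (ι x)) = ι x := (hOsub hx).1
    exact congrArg Prod.fst h1
  have hqU' : ∀ x ∈ O', G (ι x) ∈ U' := fun x hx => (hOsub hx).2.1
  have hqN : ∀ x ∈ O', ι x ∈ interior N := fun x hx => (hOsub hx).2.2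
  -- apply the non-exactness hypothesis
  apply hfne O' hO'open ⟨p₀.1, hx₀O'⟩
  · -- O' ⊆ unit ball
    intro x hx
    have := hball _ (hqU' x hx).1
    rwa [hq1 x hx] at this
  refine ⟨fun x => (2⁻¹ : ℂ) * g x, ?_, ?_⟩
  · -- smoothness
    have hιcd : ContDiff ℝ 1 ι := contDiff_id.prodMk contDiff_const
    have hmaps : Set.MapsTo ι O' (interior N) := fun x hx => hqN x hx
    have hGι : ContDiffOn ℝ 1 (fun x => G (ι x)) O' :=
      hGNi.comp hιcd.contDiffOn hmaps
    have h2 : ContDiffOn ℝ 1 g O' := contDiff_snd.comp_contDiffOn hGι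
    exact contDiffOn_const.mul h2
  · -- the ∂̄ computation
    intro x hx ξ
    set q : E × ℂ := G (ι x) with hqdef
    have hqU : q ∈ U := (hqU' x hx).1
    have hψzq : L q ((0 : E), (1 : ℂ)) ≠ 0 := by
      have := (hqU' x hx).2
      simpa using this
    have hGdiff : DifferentiableAt ℝ G (ι x) :=
      (hGNi.differentiableOn one_ne_zero).differentiableAt
        (isOpen_interior.mem_nhds (hqN x hx))
    -- chain rule : (DF_q) ∘ (DG_{ι x}) = id
    have hFq : HasFDerivAt Fm ((ContinuousLinearMap.fst ℝ E ℂ).prod (L q)) q :=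
      hasFDerivAt_fst.prodMk (hψ' q hqU)
    have hcomp : HasFDerivAt (Fm ∘ G)
        (((ContinuousLinearMap.fst ℝ E ℂ).prod (L q)).comp (fderiv ℝ G (ι x))) (ι x) :=
      hFq.comp (ι x) hGdiff.hasFDerivAt
    have hfg : Fm ∘ G =ᶠ[nhds (ι x)] id :=
      Filter.eventuallyEq_of_mem (hOopen.mem_nhds hx) fun z hz => (hOsub hz).1
    have hid : ((ContinuousLinearMap.fst ℝ E ℂ).prod (L q)).comp (fderiv ℝ G (ι x)) =
        ContinuousLinearMap.id ℝ (E × ℂ) :=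
      hcomp.unique ((hasFDerivAt_id (ι x)).congr_of_eventuallyEq hfg)
    have happ : ∀ v : E × ℂ,
        ((fderiv ℝ G (ι x) v).1, L q (fderiv ℝ G (ι x) v)) = v := by
      intro v
      have h1 := congrArg (fun (T' : (E × ℂ) →L[ℝ] (E × ℂ)) => T' v) hid
      simpa using h1
    -- derivative of g
    have hι' : HasFDerivAt ι ((ContinuousLinearMap.id ℝ E).prod (0 : E →L[ℝ] ℂ)) x :=
      (hasFDerivAt_id x).prodMk (hasFDerivAt_const cc x)
    have hGι' : HasFDerivAt (fun x' => G (ι x'))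
        ((fderiv ℝ G (ι x)).comp ((ContinuousLinearMap.id ℝ E).prod (0 : E →L[ℝ] ℂ))) x :=
      (hGdiff.hasFDerivAt).comp x hι'
    have hg'' : HasFDerivAt g ((ContinuousLinearMap.snd ℝ E ℂ).comp
        ((fderiv ℝ G (ι x)).comp ((ContinuousLinearMap.id ℝ E).prod (0 : E →L[ℝ] ℂ)))) x :=
      ((ContinuousLinearMap.snd ℝ E ℂ).hasFDerivAt).comp x hGι'
    have hgder : ∀ η : E, fderiv ℝ g x η = (fderiv ℝ G (ι x) (η, (0 : ℂ))).2 := by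
      intro η
      rw [hg''.fderiv]
      simp
    -- the linear relations
    have halpha : ∀ η : E,
        L q (η, (0 : ℂ)) + (fderiv ℝ G (ι x) (η, (0 : ℂ))).2 * L q ((0 : E), (1 : ℂ)) = 0 := by
      intro η
      have h1 := happ (η, (0 : ℂ))
      have h2 : (fderiv ℝ G (ι x) (η, (0 : ℂ))).1 = η := congrArg Prod.fst h1
      have h3 : L q (fderiv ℝ G (ι x) (η, (0 : ℂ))) = (0 : ℂ) := congrArg Prod.snd h1
      rw [hLdec q hqU _, h2] at h3
      exact h3
    set α : ℂ := (fderiv ℝ G (ι x) (ξ, (0 : ℂ))).2 with hαdef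
    set β : ℂ := (fderiv ℝ G (ι x) (Complex.I • ξ, (0 : ℂ))).2 with hβdef
    have e1 := halpha ξ
    have e2 := halpha (Complex.I • ξ)
    have e3 := hR2 q hqU ξ
    rw [hq1 x hx] at e3
    have hβ : β = Complex.I * α - 4 * Complex.I * f x ξ := by
      have h4 : β * L q ((0 : E), (1 : ℂ)) =
          (Complex.I * α - 4 * Complex.I * f x ξ) * L q ((0 : E), (1 : ℂ)) := by
        have h5 : L q (ξ, (0 : ℂ)) = -(α * L q ((0 : E), (1 : ℂ))) := by linear_combination e1
        have h6 : β * L q ((0 : E), (1 : ℂ)) = -L q (Complex.I • ξ, (0 : ℂ)) := by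
          linear_combination e2
        rw [h6, e3, h5]
        ring
      exact mul_right_cancel₀ hψzq h4
    -- conclude
    have hdg1 : fderiv ℝ g x ξ = α := hgder ξ
    have hdg2 : fderiv ℝ g x (Complex.I • ξ) = β := hgder _
    have hu'' : HasFDerivAt (fun x' => (2⁻¹ : ℂ) * g x')
        ((2⁻¹ : ℂ) • ((ContinuousLinearMap.snd ℝ E ℂ).comp
        ((fderiv ℝ G (ι x)).comp ((ContinuousLinearMap.id ℝ E).prod (0 : E →L[ℝ] ℂ))))) x :=
      hg''.const_mul _
    have hudg : ∀ η : E, fderiv ℝ (fun x' => (2⁻¹ : ℂ) * g x') x η =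
        (2⁻¹ : ℂ) * fderiv ℝ g x η := by
      intro η
      rw [hu''.fderiv, hg''.fderiv]
      simp
    simp only [dbarAt, hudg, hdg1, hdg2, hβ]
    ring_nf
    rw [Complex.I_sq]
    ring
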